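/- arXiv:2605.21144 — 3 statements merged into one kernel-verified Lean document; each statement's English description precedes it below -/
import Mathlib

section
/- The composition of the discrete one-way operators equals a weighted three-point Laplacian plus a zeroth-order term: for any grid function u and interior index i, (D_k⁻ D_k⁺ u)_i = Θ(kh)·(u_{i+1} − 2u_i + u_{i−1})/h² + k² u_i, where Θ(s) = B(is)B(−is). -/
/-- The Bernoulli function `B(z) = z / (exp z - 1)` with `B 0 = 1`. -/
noncomputable def bernoulliFn (z : ℂ) : ℂ :=
  if z = 0 then 1 else z / (Complex.exp z - 1)

/-- Discrete forward one-way operator `D_k⁺`. -/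
noncomputable def Dplus (k h : ℝ) (u : ℤ → ℂ) (i : ℤ) : ℂ :=
  (bernoulliFn (Complex.I * (k * h)) * u (i + 1)
    - bernoulliFn (-(Complex.I * (k * h))) * u i) / h

/-- Discrete backward one-way operator `D_k⁻`. -/
noncomputable def Dminus (k h : ℝ) (u : ℤ → ℂ) (i : ℤ) : ℂ :=
  (bernoulliFn (-(Complex.I * (k * h))) * u i
    - bernoulliFn (Complex.I * (k * h)) * u (i - 1)) / h

lemma bern_neg (z : ℂ) (hz : Complex.exp z ≠ 1) :
    bernoulliFn (-z) = bernoulliFn z + z := by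
  have hz0 : z ≠ 0 := by rintro rfl; simp at hz
  have he : Complex.exp z ≠ 0 := Complex.exp_ne_zero z
  have h1 : Complex.exp z - 1 ≠ 0 := sub_ne_zero.mpr hz
  have h2 : Complex.exp (-z) - 1 ≠ 0 := by
    rw [Complex.exp_neg, sub_ne_zero]
    intro h
    apply hz
    field_simp at h
    simp [h]
  unfold bernoulliFn
  rw [if_neg (neg_ne_zero.mpr hz0), if_neg hz0]
  have h3 : (1 : ℂ) - Complex.exp z ≠ 0 := fun h => hz (by linear_combination -h)
  rw [Complex.exp_neg] at h2 ⊢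
  field_simp [h3]
  ring

theorem composition_three_point (k h : ℝ) (hk : 0 < k) (hh : 0 < h)
    (hkh : ∀ n : ℤ, k * h ≠ 2 * Real.pi * n) (u : ℤ → ℂ) (i : ℤ) :
    Dminus k h (Dplus k h u) i
      = (bernoulliFn (Complex.I * (k * h)) * bernoulliFn (-(Complex.I * (k * h))))
          * ((u (i + 1) - 2 * u i + u (i - 1)) / (h : ℂ) ^ 2)
        + (k : ℂ) ^ 2 * u i := by
  set z : ℂ := Complex.I * (k * h) with hzdef
  have hexp : Complex.exp z ≠ 1 := by
    intro hc
    rw [Complex.exp_eq_one_iff] at hc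
    obtain ⟨n, hn⟩ := hc
    apply hkh n
    rw [hzdef] at hn
    have hn' : ((k * h : ℝ) : ℂ) = ((2 * Real.pi * n : ℝ) : ℂ) := by
      push_cast
      linear_combination (-Complex.I) * hn + ((k:ℂ)*h - 2*Real.pi*n) * Complex.I_sq
    exact_mod_cast hn'
  have hb := bern_neg z hexp
  have hh0 : (h : ℂ) ≠ 0 := by exact_mod_cast hh.ne'
  have hz2 : z ^ 2 = -((k : ℂ) * h) ^ 2 := by
    rw [hzdef]; linear_combination ((k:ℂ)*h)^2 * Complex.I_sq
  unfold Dminus Dplus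
  rw [hb]
  rw [show i - 1 + 1 = i by ring]
  have hinv : (h:ℂ)^2 * ((h:ℂ)^2)⁻¹ = 1 := mul_inv_cancel₀ (pow_ne_zero 2 hh0)
  linear_combination (-u i / (h:ℂ)^2) * hz2 + ((k:ℂ)^2 * u i) * hinv
end

section
/- Let g(t) = sin²(√t)/t for t > 0. Then |g'(t)| ≤ 1/3 for all t > 0. -/
open Real Set

lemma lemA (s : ℝ) (hs : 0 ≤ s) : Real.sin s - s * Real.cos s ≤ s ^ 3 / 3 := by
  have key : ∀ x : ℝ, HasDerivAt (fun x : ℝ => x ^ 3 / 3 - (Real.sin x - x * Real.cos x))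
      (x ^ 2 - x * Real.sin x) x := by
    intro x
    have h1 := ((hasDerivAt_pow 3 x).div_const 3).fun_sub
      ((Real.hasDerivAt_sin x).fun_sub ((hasDerivAt_id x).fun_mul (Real.hasDerivAt_cos x)))
    refine h1.congr_deriv ?_
    simp only [id_eq]; push_cast; ring
  have hmono : MonotoneOn (fun x : ℝ => x ^ 3 / 3 - (Real.sin x - x * Real.cos x)) (Ici 0) := by
    apply monotoneOn_of_deriv_nonneg (convex_Ici 0)
    · exact Continuous.continuousOn (by continuity)
    · intro x _; exact (key x).differentiableAt.differentiableWithinAt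
    · intro x hx
      rw [(key x).deriv]
      have hx0 : 0 ≤ x := le_of_lt (by simpa using hx)
      nlinarith [Real.sin_le hx0, Real.neg_one_le_sin x]
  have h0 : (fun x : ℝ => x ^ 3 / 3 - (Real.sin x - x * Real.cos x)) 0 = 0 := by simp
  have := hmono (self_mem_Ici) (mem_Ici.2 hs) hs
  rw [h0] at this
  linarith [this]

lemma lemB (s : ℝ) (hs : 0 ≤ s) (hspi : s ≤ Real.pi) : 0 ≤ Real.sin s - s * Real.cos s := by
  have key : ∀ x : ℝ, HasDerivAt (fun x : ℝ => Real.sin x - x * Real.cos x)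
      (x * Real.sin x) x := by
    intro x
    have h1 := (Real.hasDerivAt_sin x).fun_sub ((hasDerivAt_id x).fun_mul (Real.hasDerivAt_cos x))
    refine h1.congr_deriv ?_; simp only [id_eq]; ring
  have hmono : MonotoneOn (fun x : ℝ => Real.sin x - x * Real.cos x) (Icc 0 Real.pi) := by
    apply monotoneOn_of_deriv_nonneg (convex_Icc 0 Real.pi)
    · exact Continuous.continuousOn (by continuity)
    · intro x _; exact (key x).differentiableAt.differentiableWithinAt
    · intro x hx
      rw [(key x).deriv]
      rw [interior_Icc] at hx
      exact mul_nonneg hx.1.le (Real.sin_nonneg_of_nonneg_of_le_pi hx.1.le hx.2.le)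
  have := hmono (by constructor <;> [rfl; exact Real.pi_nonneg]) ⟨hs, hspi⟩ hs
  simpa using this

lemma lemC (s : ℝ) (hs : 0 < s) : |s * Real.sin s * Real.cos s - Real.sin s ^ 2| ≤ s ^ 4 / 3 := by
  rcases le_or_gt s Real.pi with hpi | hpi
  · have hsin0 : 0 ≤ Real.sin s := Real.sin_nonneg_of_nonneg_of_le_pi hs.le hpi
    have hsinle : Real.sin s ≤ s := Real.sin_le hs.le
    have hA := lemA s hs.le
    have hB := lemB s hs.le hpi
    rw [abs_le]
    constructor
    · -- -(s^4/3) ≤ s sin s cos s - sin² s, i.e. sin s (sin s - s cos s) ≤ s^4/3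
      nlinarith [mul_le_mul hsinle hA (by nlinarith) hs.le]
    · -- s sin s cos s - sin² s = -sin s (sin s - s cos s) ≤ 0
      nlinarith [mul_nonneg hsin0 hB]
  · have h3 : (3 : ℝ) ≤ s := le_trans (by nlinarith [Real.pi_gt_d6]) hpi.le
    have h1 : |Real.sin s| ≤ 1 := Real.abs_sin_le_one s
    have h2 : |Real.cos s| ≤ 1 := Real.abs_cos_le_one s
    have habs : |s * Real.sin s * Real.cos s - Real.sin s ^ 2| ≤ s + 1 := by
      calc |s * Real.sin s * Real.cos s - Real.sin s ^ 2|
          ≤ |s * Real.sin s * Real.cos s| + |Real.sin s ^ 2| := abs_sub _ _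
        _ ≤ s + 1 := by
            rw [abs_mul, abs_mul, abs_of_pos hs, abs_of_nonneg (sq_nonneg (Real.sin s))]
            nlinarith [abs_nonneg (Real.sin s), abs_nonneg (Real.cos s), sq_abs (Real.sin s),
              mul_le_mul h1 h2 (abs_nonneg _) zero_le_one]
    refine habs.trans ?_
    have h27 : (27 : ℝ) ≤ s ^ 3 := by nlinarith [sq_nonneg (s - 3), sq_nonneg s]
    nlinarith [mul_le_mul_of_nonneg_right h27 hs.le]

theorem deriv_g_bound (t : ℝ) (ht : 0 < t) :
    |deriv (fun t : ℝ => Real.sin (Real.sqrt t) ^ 2 / t) t| ≤ 1 / 3 := by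
  set s := Real.sqrt t with hsdef
  have hs0 : 0 < s := Real.sqrt_pos.2 ht
  have hst : s ^ 2 = t := Real.sq_sqrt ht.le
  have hderiv : HasDerivAt (fun t : ℝ => Real.sin (Real.sqrt t) ^ 2 / t)
      ((s * Real.sin s * Real.cos s - Real.sin s ^ 2) / s ^ 4) t := by
    have hsq : HasDerivAt Real.sqrt (1 / (2 * s)) t := Real.hasDerivAt_sqrt ht.ne'
    have hsin : HasDerivAt (fun t : ℝ => Real.sin (Real.sqrt t))
        (Real.cos s * (1 / (2 * s))) t := (Real.hasDerivAt_sin s).comp t hsq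
    have hpow : HasDerivAt (fun t : ℝ => Real.sin (Real.sqrt t) ^ 2)
        (2 * Real.sin s ^ 1 * (Real.cos s * (1 / (2 * s)))) t := by
      simpa using hsin.fun_pow 2
    have hdiv := hpow.fun_div (hasDerivAt_id t) ht.ne'
    refine hdiv.congr_deriv ?_
    simp only [id_eq]; rw [← hsdef]
    rw [← hst]
    field_simp
  rw [hderiv.deriv, abs_div, abs_of_pos (by positivity : (0:ℝ) < s ^ 4)]
  rw [div_le_iff₀ (by positivity)]
  calc |s * Real.sin s * Real.cos s - Real.sin s ^ 2| ≤ s ^ 4 / 3 := lemC s hs0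
    _ = 1 / 3 * s ^ 4 := by ring
end

section
/- The interior Fourier multiplier of the phase-fitted scheme is uniformly second order: for all ξ > 0, h > 0, k > 0 with kh ∉ 2πℤ and ξ ≠ k, the quantity M = (Θ(kh)·(4/h²)·sin²(ξh/2) − ξ²)/(ξ² − k²) satisfies |M| ≤ Θ(kh)·h²ξ²/12, where Θ(s) = s²/(4 sin²(s/2)). -/
open Real

lemma aux_mono (c : ℝ) (hc : |c| ≤ 1) {x : ℝ} (hx : 0 ≤ x) :
    c * (Real.sin x - x * Real.cos x) ≤ x ^ 3 / 3 := by
  set f : ℝ → ℝ := fun s => s ^ 3 / 3 - c * (Real.sin s - s * Real.cos s) with hf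
  have hder : ∀ s : ℝ, HasDerivAt f (s ^ 2 - c * (s * Real.sin s)) s := by
    intro s
    have h1 : HasDerivAt (fun s : ℝ => s ^ 3 / 3) (s ^ 2) s := by
      have := (hasDerivAt_pow 3 s).div_const 3
      exact this.congr_deriv (by norm_num)
    have h2 : HasDerivAt (fun s : ℝ => Real.sin s - s * Real.cos s) (s * Real.sin s) s := by
      have := (Real.hasDerivAt_sin s).sub ((hasDerivAt_id s).mul (Real.hasDerivAt_cos s))
      exact this.congr_deriv (by simp only [id_eq]; ring)
    have := h1.sub (h2.const_mul c)
    exact this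
  have hmono : Monotone f :=
    monotone_of_deriv_nonneg (fun s => (hder s).differentiableAt) (by
      intro s
      rw [(hder s).deriv]
      have h1 : |c * (s * Real.sin s)| ≤ s ^ 2 := by
        rw [abs_mul, abs_mul]
        calc |c| * (|s| * |Real.sin s|) ≤ 1 * (|s| * |s|) := by
              apply mul_le_mul hc (mul_le_mul_of_nonneg_left Real.abs_sin_le_abs (abs_nonneg s))
                (by positivity) zero_le_one
          _ = s ^ 2 := by rw [one_mul, ← abs_mul, ← sq, abs_sq]
      have h2 := le_abs_self (c * (s * Real.sin s))
      linarith)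
  have h0 : f 0 ≤ f x := hmono hx
  simp only [hf] at h0
  norm_num at h0
  linarith

lemma aux_cube (x : ℝ) (hx : 0 ≤ x) : |Real.sin x - x * Real.cos x| ≤ x ^ 3 / 3 := by
  rw [abs_le]
  constructor
  · have := aux_mono (-1) (by norm_num) hx
    linarith
  · have := aux_mono 1 (by norm_num) hx
    linarith

lemma g_hasDerivAt {t : ℝ} (ht : 0 < t) :
    HasDerivAt (fun t : ℝ => Real.sin (Real.sqrt t) ^ 2 / t)
      ((2 * Real.sin (Real.sqrt t) ^ 1 * (Real.cos (Real.sqrt t) * (1 / (2 * Real.sqrt t))) * t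
        - Real.sin (Real.sqrt t) ^ 2 * 1) / t ^ 2) t := by
  have hs : HasDerivAt Real.sqrt (1 / (2 * Real.sqrt t)) t := Real.hasDerivAt_sqrt ht.ne'
  have hsin : HasDerivAt (fun t : ℝ => Real.sin (Real.sqrt t))
      (Real.cos (Real.sqrt t) * (1 / (2 * Real.sqrt t))) t :=
    (Real.hasDerivAt_sin _).comp t hs
  exact (hsin.pow 2).div (hasDerivAt_id t) ht.ne'

lemma g_lipschitz {a b : ℝ} (ha : 0 < a) (hb : 0 < b) :
    |Real.sin (Real.sqrt a) ^ 2 / a - Real.sin (Real.sqrt b) ^ 2 / b| ≤ 1 / 3 * |a - b| := by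
  have key := Convex.norm_image_sub_le_of_norm_hasDerivWithin_le
    (f := fun t : ℝ => Real.sin (Real.sqrt t) ^ 2 / t)
    (f' := fun t => (2 * Real.sin (Real.sqrt t) ^ 1 * (Real.cos (Real.sqrt t)
        * (1 / (2 * Real.sqrt t))) * t - Real.sin (Real.sqrt t) ^ 2 * 1) / t ^ 2)
    (s := Set.Ioi (0:ℝ)) (C := 1/3)
    (fun x hx => (g_hasDerivAt hx).hasDerivWithinAt)
    (fun x hx => by
      have hx' : (0:ℝ) < x := hx
      set s := Real.sqrt x with hsdef
      have hs0 : 0 < s := Real.sqrt_pos.2 hx'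
      have hst : s ^ 2 = x := Real.sq_sqrt hx'.le
      have hnum : 2 * Real.sin s ^ 1 * (Real.cos s * (1 / (2 * s))) * x - Real.sin s ^ 2 * 1
          = Real.sin s * (s * Real.cos s - Real.sin s) := by
        rw [← hst]; field_simp
      rw [Real.norm_eq_abs, abs_div, hnum, abs_mul]
      have h1 : |Real.sin s| ≤ s := by
        calc |Real.sin s| ≤ |s| := Real.abs_sin_le_abs
          _ = s := abs_of_pos hs0
      have h2 : |s * Real.cos s - Real.sin s| ≤ s ^ 3 / 3 := by
        have := aux_cube s hs0.le
        rw [← abs_neg] at this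
        convert this using 2
        ring
      have h3 : |Real.sin s| * |s * Real.cos s - Real.sin s| ≤ s * (s ^ 3 / 3) :=
        mul_le_mul h1 h2 (abs_nonneg _) hs0.le
      have h4 : s * (s ^ 3 / 3) = x ^ 2 / 3 := by rw [← hst]; ring
      rw [div_le_iff₀ (by positivity : (0:ℝ) < |x ^ 2|), abs_of_pos (by positivity : (0:ℝ) < x ^ 2)]
      linarith)
    (convex_Ioi 0) (Set.mem_Ioi.2 hb) (Set.mem_Ioi.2 ha)
  simpa [Real.norm_eq_abs] using key

theorem interior_multiplier_bound (ξ h k : ℝ) (hξ : 0 < ξ) (hh : 0 < h) (hk : 0 < k)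
    (hkh : ∀ n : ℤ, k * h ≠ 2 * Real.pi * n) (hne : ξ ≠ k) :
    |((k * h) ^ 2 / (4 * Real.sin (k * h / 2) ^ 2) * (4 / h ^ 2)
          * Real.sin (ξ * h / 2) ^ 2 - ξ ^ 2) / (ξ ^ 2 - k ^ 2)|
      ≤ (k * h) ^ 2 / (4 * Real.sin (k * h / 2) ^ 2) * (h ^ 2 * ξ ^ 2) / 12 := by
  have hS : Real.sin (k * h / 2) ≠ 0 := by
    intro h0
    rcases Real.sin_eq_zero_iff.1 h0 with ⟨n, hn⟩
    exact hkh n (by linarith [hn])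
  set a := (ξ * h / 2) ^ 2 with hadef
  set b := (k * h / 2) ^ 2 with hbdef
  have ha : 0 < a := by positivity
  have hb : 0 < b := by positivity
  have hsa : Real.sqrt a = ξ * h / 2 := Real.sqrt_sq (by positivity)
  have hsb : Real.sqrt b = k * h / 2 := Real.sqrt_sq (by positivity)
  have hab : a ≠ b := by
    intro he
    have : ξ * h / 2 = k * h / 2 := by rw [← hsa, ← hsb, he]
    apply hne
    field_simp at this
    linarith
  have hd : ξ ^ 2 - k ^ 2 ≠ 0 := by
    intro he
    apply hab
    simp only [hadef, hbdef]
    have hk2 : ξ ^ 2 = k ^ 2 := by linarith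
    rw [div_pow, div_pow, mul_pow, mul_pow, hk2]
  have hlip := g_lipschitz ha hb
  rw [hsa, hsb] at hlip
  set Θ := (k * h) ^ 2 / (4 * Real.sin (k * h / 2) ^ 2) with hΘ
  have hΘpos : 0 < Θ := by
    apply div_pos (by positivity)
    positivity
  have hrw : (Θ * (4 / h ^ 2) * Real.sin (ξ * h / 2) ^ 2 - ξ ^ 2) / (ξ ^ 2 - k ^ 2)
      = (Θ * ξ ^ 2 * h ^ 2 / 4) * ((Real.sin (ξ * h / 2) ^ 2 / a - Real.sin (k * h / 2) ^ 2 / b)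
        / (a - b)) := by
    have habne : a - b ≠ 0 := sub_ne_zero.2 hab
    have h4 : a - b = (ξ ^ 2 - k ^ 2) * h ^ 2 / 4 := by
      simp only [hadef, hbdef]; ring
    rw [hΘ]
    field_simp
    ring
  rw [hrw, abs_mul]
  have hfrac : |(Real.sin (ξ * h / 2) ^ 2 / a - Real.sin (k * h / 2) ^ 2 / b) / (a - b)| ≤ 1 / 3 := by
    rw [abs_div, div_le_iff₀ (abs_pos.2 (sub_ne_zero.2 hab))]
    linarith
  have hpos : 0 ≤ |Θ * ξ ^ 2 * h ^ 2 / 4| := abs_nonneg _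
  calc |Θ * ξ ^ 2 * h ^ 2 / 4| * |(Real.sin (ξ * h / 2) ^ 2 / a
        - Real.sin (k * h / 2) ^ 2 / b) / (a - b)|
      ≤ |Θ * ξ ^ 2 * h ^ 2 / 4| * (1 / 3) := mul_le_mul_of_nonneg_left hfrac hpos
    _ = Θ * (h ^ 2 * ξ ^ 2) / 12 := by
        rw [abs_of_pos (by positivity : (0:ℝ) < Θ * ξ ^ 2 * h ^ 2 / 4)]
        ring
end
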